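/- Let α, α₁, α₂ ∈ ℝ and let (A_n)_{n≥0} be a real sequence satisfying the stationary nonisospectral Lotka–Volterra system: for all n ≥ 2, 2α + α₁(A_{n+1} − A_{n−1}) + α₂(A_{n+1}(A_n + A_{n+1} + A_{n+2}) − A_{n−1}(A_{n−2} + A_{n−1} + A_n)) = 0. Then there exists a real constant C such that for all n ≥ 1: 2nα + α₁(A_{n+1} + A_n) + α₂(A_{n+1}(A_n + A_{n+1} + A_{n+2}) + A_n(A_{n−1} + A_n + A_{n+1})) + C = 0. -/

import Mathlib

/-!
The relation without `C` defines a function `F n` whose increment `F (n + 1) - F n` is exactly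
the left-hand side of the lattice equation at `n + 1`; hence `F` is constant for `n ≥ 1`.
-/

namespace StationaryLotkaVolterra

variable (α α₁ α₂ : ℝ) (A : ℕ → ℝ)

def equationLHS (n : ℕ) : ℝ :=
  2 * α + α₁ * (A (n + 1) - A (n - 1))
    + α₂ * (A (n + 1) * (A n + A (n + 1) + A (n + 2))
        - A (n - 1) * (A (n - 2) + A (n - 1) + A n))

def firstIntegral (n : ℕ) : ℝ :=
  2 * (n : ℝ) * α + α₁ * (A (n + 1) + A n)
    + α₂ * (A (n + 1) * (A n + A (n + 1) + A (n + 2))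
        + A n * (A (n - 1) + A n + A (n + 1)))

theorem firstIntegral_succ_sub (n : ℕ) :
    firstIntegral α α₁ α₂ A (n + 1) - firstIntegral α α₁ α₂ A n =
      equationLHS α α₁ α₂ A (n + 1) := by
  simp only [firstIntegral, equationLHS, Nat.add_sub_cancel, Nat.add_assoc, Nat.reduceAdd]
  push_cast
  ring

theorem firstIntegral_eq_of_equationLHS_eq_zero
    (h : ∀ n, 2 ≤ n → equationLHS α α₁ α₂ A n = 0) {n : ℕ} (hn : 1 ≤ n) :
    firstIntegral α α₁ α₂ A n = firstIntegral α α₁ α₂ A 1 := by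
  induction n, hn using Nat.le_induction with
  | base => rfl
  | succ m hm ih =>
    rw [← ih, ← sub_eq_zero, firstIntegral_succ_sub, h (m + 1) (by omega)]

end StationaryLotkaVolterra

open StationaryLotkaVolterra in
theorem stationary_lotka_volterra_first_integral
    (α α₁ α₂ : ℝ) (A : ℕ → ℝ)
    (h : ∀ n : ℕ, 2 ≤ n →
      2 * α + α₁ * (A (n + 1) - A (n - 1))
        + α₂ * (A (n + 1) * (A n + A (n + 1) + A (n + 2))
            - A (n - 1) * (A (n - 2) + A (n - 1) + A n)) = 0) :
    ∃ C : ℝ, ∀ n : ℕ, 1 ≤ n →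
      2 * (n : ℝ) * α + α₁ * (A (n + 1) + A n)
        + α₂ * (A (n + 1) * (A n + A (n + 1) + A (n + 2))
            + A n * (A (n - 1) + A n + A (n + 1))) + C = 0 :=
  ⟨-firstIntegral α α₁ α₂ A 1, fun _ hn => by
    rw [← firstIntegral_eq_of_equationLHS_eq_zero α α₁ α₂ A h hn, ← sub_eq_add_neg]
    exact sub_self _⟩
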